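/- arXiv:2109.10846 — 4 statements merged into one kernel-verified Lean document; each statement's English description precedes it below -/
import Mathlib

section
/- Let T have the wandering subspace property and let w be a bounded point evaluation for T, with E_w : H → ker T* the continuous extension of the evaluation map p(T) ↦ p(w). Then E_w*(ker T*) = ker(T* − w̄), and E_w* : ker T* → ker(T* − w̄) is a bijective bounded operator with bounded inverse. -/
open ContinuousLinearMap Submodule Filter

noncomputable section

variable {H : Type*} [NormedAddCommGroup H] [InnerProductSpace ℂ H] [CompleteSpace H]

/-- The wandering subspace `ker T*`. -/
def kerAdj (T : H →L[ℂ] H) : Submodule ℂ H := LinearMap.ker (ContinuousLinearMap.adjoint T : H →ₗ[ℂ] H)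

/-- `T` has the wandering subspace property: the closed linear span of
`⋃ₙ Tⁿ(ker T*)` is all of `H`. -/
def WSP (T : H →L[ℂ] H) : Prop :=
  (⨆ n : ℕ, (kerAdj T).map ((T ^ n : H →L[ℂ] H) : H →ₗ[ℂ] H)).topologicalClosure = ⊤

/-- `w` is a bounded point evaluation for `T`: `‖p(w)‖ ≤ c ‖p(T)‖` for all
`ker T*`-valued polynomials `p`, where `p(T) = Σ Tⁿ xₙ` for `p(z) = Σ xₙ zⁿ`. -/
def IsBPE (T : H →L[ℂ] H) (w : ℂ) : Prop :=
  ∃ c > (0 : ℝ), ∀ (k : ℕ) (x : ℕ → H), (∀ n, x n ∈ kerAdj T) →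
    ‖∑ n ∈ Finset.range (k + 1), w ^ n • x n‖ ≤
      c * ‖∑ n ∈ Finset.range (k + 1), (T ^ n) (x n)‖

/-- `E` is the (continuous extension of the) evaluation operator at `w`:
it takes values in `ker T*` and sends `p(T)` to `p(w)`. -/
def IsEval (T : H →L[ℂ] H) (w : ℂ) (E : H →L[ℂ] H) : Prop :=
  (∀ y, E y ∈ kerAdj T) ∧
    ∀ (k : ℕ) (x : ℕ → H), (∀ n, x n ∈ kerAdj T) →
      E (∑ n ∈ Finset.range (k + 1), (T ^ n) (x n)) =
        ∑ n ∈ Finset.range (k + 1), w ^ n • x n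

/-! The identity `E (Tⁿ x) = wⁿ x` on `ker T*` and the density of `⋃ₙ Tⁿ(ker T*)` give
`E T = w E`, hence `T* E* = w̄ E*`: the range of `E*` lies in `ker (T* - w̄)`. Since `E` is the
identity on `ker T*`, the orthogonal projection `P` onto `ker T*` satisfies `P E* x = x` there,
which gives `‖x‖ ≤ ‖E* x‖`. Conversely, for `u ∈ ker (T* - w̄)` the functionals `⟪u, ·⟫` and
`⟪E* P u, ·⟫` both intertwine `T` with multiplication by `w` and agree on `ker T*`, so they agree
on all `Tⁿ(ker T*)` and hence everywhere: `u = E* P u`. -/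

section

variable {M F : Type*} [NormedAddCommGroup M] [NormedSpace ℂ M]

theorem mem_ker_sub_smul_one_iff {A : M →L[ℂ] M} {c : ℂ} {u : M} :
    u ∈ LinearMap.ker ((A - c • (1 : M →L[ℂ] M) : M →L[ℂ] M) : M →ₗ[ℂ] M) ↔ A u = c • u := by
  simp [sub_eq_zero]

theorem ContinuousLinearMap.apply_pow_apply_of_comp_eq_smul [TopologicalSpace F]
    [AddCommGroup F] [Module ℂ F] [ContinuousConstSMul ℂ F] {T : M →L[ℂ] M} {f : M →L[ℂ] F}
    {w : ℂ} (h : f ∘L T = w • f) (n : ℕ) (x : M) : f ((T ^ n) x) = w ^ n • f x := by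
  induction n generalizing x with
  | zero => simp
  | succ n ih =>
    rw [pow_succ, mul_apply_eq_comp, ih, ← f.comp_apply, h, smul_apply, smul_smul, pow_succ]

end

instance (T : H →L[ℂ] H) : (kerAdj T).HasOrthogonalProjection :=
  haveI : CompleteSpace (kerAdj T) := (adjoint T).isClosed_ker.completeSpace_coe
  inferInstance

section

variable {F : Type*} [TopologicalSpace F] [AddCommGroup F] [Module ℂ F] {T : H →L[ℂ] H}

theorem WSP.ext [T2Space F] (hT : WSP T) {f g : H →L[ℂ] F}
    (h : ∀ n, ∀ x ∈ kerAdj T, f ((T ^ n) x) = g ((T ^ n) x)) : f = g := by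
  have hle : (⨆ n : ℕ, (kerAdj T).map ((T ^ n : H →L[ℂ] H) : H →ₗ[ℂ] H)) ≤
      LinearMap.eqLocus (f : H →ₗ[ℂ] F) g :=
    iSup_le fun n => Submodule.map_le_iff_le_comap.2 fun x hx => h n x hx
  have hclosure := Submodule.topologicalClosure_minimal _ hle (f.isClosed_eqLocus g)
  rw [hT, top_le_iff] at hclosure
  ext x
  exact (hclosure ▸ Submodule.mem_top : x ∈ LinearMap.eqLocus (f : H →ₗ[ℂ] F) g)

theorem WSP.ext_of_comp_eq_smul [T2Space F] [ContinuousConstSMul ℂ F] (hT : WSP T) {w : ℂ}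
    {f g : H →L[ℂ] F} (hf : f ∘L T = w • f) (hg : g ∘L T = w • g)
    (h : ∀ x ∈ kerAdj T, f x = g x) : f = g :=
  hT.ext fun n x hx => by
    rw [apply_pow_apply_of_comp_eq_smul hf, apply_pow_apply_of_comp_eq_smul hg, h x hx]

end

theorem innerSL_comp_eq_smul_of_adjoint_apply {T : H →L[ℂ] H} {w : ℂ} {u : H}
    (hu : adjoint T u = starRingEnd ℂ w • u) : innerSL ℂ u ∘L T = w • innerSL ℂ u := by
  ext h
  simp [← adjoint_inner_left, hu, inner_smul_left]

namespace IsEval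

variable {T E : H →L[ℂ] H} {w : ℂ}

theorem apply_pow_apply (hE : IsEval T w E) (n : ℕ) {x : H} (hx : x ∈ kerAdj T) :
    E ((T ^ n) x) = w ^ n • x := by
  have h := hE.2 n (Pi.single n x) fun m => by
    by_cases hm : m = n <;> simp [hm, hx]
  simpa [Pi.single_apply, apply_ite, Finset.sum_ite_eq'] using h

theorem apply_eq_self (hE : IsEval T w E) {x : H} (hx : x ∈ kerAdj T) : E x = x := by
  simpa using hE.apply_pow_apply 0 hx

theorem comp_eq_smul (hE : IsEval T w E) (hT : WSP T) : E ∘L T = w • E :=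
  hT.ext fun n x hx => by
    change E (T ((T ^ n) x)) = w • E ((T ^ n) x)
    rw [← mul_apply_eq_comp T, ← pow_succ', hE.apply_pow_apply _ hx,
      hE.apply_pow_apply _ hx, smul_smul, pow_succ']

theorem adjoint_apply_adjoint_apply (hE : IsEval T w E) (hT : WSP T) (z : H) :
    adjoint T (adjoint E z) = starRingEnd ℂ w • adjoint E z := by
  rw [← comp_apply, ← adjoint_comp, hE.comp_eq_smul hT, map_smulₛₗ, smul_apply]

theorem range_adjoint_le (hE : IsEval T w E) (hT : WSP T) :
    LinearMap.range (adjoint E : H →ₗ[ℂ] H) ≤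
      LinearMap.ker ((adjoint T - starRingEnd ℂ w • (1 : H →L[ℂ] H) : H →L[ℂ] H) : H →ₗ[ℂ] H) := by
  rintro _ ⟨z, rfl⟩
  exact mem_ker_sub_smul_one_iff.2 (hE.adjoint_apply_adjoint_apply hT z)

theorem starProjection_adjoint_apply (hE : IsEval T w E) {x : H} (hx : x ∈ kerAdj T) :
    (kerAdj T).starProjection (adjoint E x) = x :=
  eq_starProjection_of_mem_of_inner_eq_zero hx fun y hy => by
    rw [inner_sub_left, adjoint_inner_left, hE.apply_eq_self hy, sub_self]

theorem norm_le_norm_adjoint_apply (hE : IsEval T w E) {x : H} (hx : x ∈ kerAdj T) :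
    ‖x‖ ≤ ‖adjoint E x‖ := by
  simpa [hE.starProjection_adjoint_apply hx] using
    (kerAdj T).norm_starProjection_apply_le (adjoint E x)

theorem adjoint_starProjection_apply (hE : IsEval T w E) (hT : WSP T) {u : H}
    (hu : adjoint T u = starRingEnd ℂ w • u) : adjoint E ((kerAdj T).starProjection u) = u := by
  have hinner : innerSL ℂ (adjoint E ((kerAdj T).starProjection u)) = innerSL ℂ u :=
    hT.ext_of_comp_eq_smul
      (innerSL_comp_eq_smul_of_adjoint_apply (hE.adjoint_apply_adjoint_apply hT _))
      (innerSL_comp_eq_smul_of_adjoint_apply hu) fun y hy => by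
        rw [innerSL_apply_apply, innerSL_apply_apply, adjoint_inner_left, hE.apply_eq_self hy,
          inner_starProjection_left_eq_right, (kerAdj T).starProjection_eq_self_iff.2 hy]
  exact ext_inner_right ℂ fun v => congr($hinner v)

end IsEval

theorem stmt_3_general (T : H →L[ℂ] H) (hT : WSP T)
    (w : ℂ) (E : H →L[ℂ] H) (hE : IsEval T w E) :
    (kerAdj T).map (ContinuousLinearMap.adjoint E : H →ₗ[ℂ] H) =
      LinearMap.ker ((ContinuousLinearMap.adjoint T - (starRingEnd ℂ w) • (1 : H →L[ℂ] H) : H →L[ℂ] H) : H →ₗ[ℂ] H) ∧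
    ∃ c > (0 : ℝ), ∀ x ∈ kerAdj T, ‖x‖ ≤ c * ‖ContinuousLinearMap.adjoint E x‖ := by
  refine ⟨le_antisymm (LinearMap.map_le_range.trans (hE.range_adjoint_le hT)) fun u hu => ?_,
    1, one_pos, fun x hx => ?_⟩
  · exact ⟨_, starProjection_apply_mem _ u,
      hE.adjoint_starProjection_apply hT (mem_ker_sub_smul_one_iff.1 hu)⟩
  · simpa using hE.norm_le_norm_adjoint_apply hx

/-- `E_w*(ker T*) = ker(T* - w̄)` and `E_w* : ker T* → ker(T* - w̄)` is
bijective with bounded inverse. -/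
theorem stmt_3 [TopologicalSpace.SeparableSpace H] (T : H →L[ℂ] H) (hT : WSP T)
    (w : ℂ) (hw : IsBPE T w) (E : H →L[ℂ] H) (hE : IsEval T w E) :
    (kerAdj T).map (ContinuousLinearMap.adjoint E : H →ₗ[ℂ] H) =
      LinearMap.ker ((ContinuousLinearMap.adjoint T - (starRingEnd ℂ w) • (1 : H →L[ℂ] H) : H →L[ℂ] H) : H →ₗ[ℂ] H) ∧
    ∃ c > (0 : ℝ), ∀ x ∈ kerAdj T, ‖x‖ ≤ c * ‖ContinuousLinearMap.adjoint E x‖ :=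
  stmt_3_general T hT w E hE
end
end

section
/- Let T have the wandering subspace property and w be a bounded point evaluation with evaluation operator E_w : H → ker T*. Then ker E_w equals the closure of the range of T − w. -/
/-!
Both `ker E` and the preimage of `cl ran (T - w)` under `1 - E` are closed subspaces, so by the
wandering subspace property it suffices to check that they contain every `Tⁿ x` with
`x ∈ ker T*`. There `E (Tⁿ x) = wⁿ x`, so `E ((T - w) Tⁿ x) = wⁿ⁺¹ x - w wⁿ x = 0`, and
`(1 - E) Tⁿ x = Tⁿ x - wⁿ x` is divisible by `T - w`. Since `1 - E` fixes `ker E`, this gives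
`ker E ⊆ cl ran (T - w)`; the other inclusion is `E (T - w) = 0`.
-/

open ContinuousLinearMap Submodule Filter

noncomputable section

variable {H : Type*} [NormedAddCommGroup H] [InnerProductSpace ℂ H] [CompleteSpace H]

theorem ContinuousLinearMap.pow_apply_sub_pow_smul_mem_range {R M : Type*} [CommRing R]
    [TopologicalSpace M] [AddCommGroup M] [IsTopologicalAddGroup M] [Module R M]
    [ContinuousConstSMul R M] (A : M →L[R] M) (c : R) (n : ℕ) (x : M) :
    (A ^ n) x - c ^ n • x ∈ LinearMap.range ((A - c • 1 : M →L[R] M) : M →ₗ[R] M) := by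
  obtain ⟨B, hB⟩ := ((Commute.one_right A).smul_right c).sub_dvd_pow_sub_pow n
  refine ⟨B x, ?_⟩
  rw [ContinuousLinearMap.coe_coe, ← mul_apply_eq_comp, ← hB, smul_pow, one_pow]
  simp

theorem WSP.eq_top_of_isClosed {T : H →L[ℂ] H} (hT : WSP T) {K : Submodule ℂ H}
    (hK : IsClosed (K : Set H)) (hTK : ∀ n, ∀ x ∈ kerAdj T, (T ^ n) x ∈ K) : K = ⊤ := by
  refine top_unique (hT ▸ topologicalClosure_minimal _ (iSup_le fun n => ?_) hK)
  rintro _ ⟨x, hx, rfl⟩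
  exact hTK n x hx

theorem IsEval.apply_pow_apply_s4 {T E : H →L[ℂ] H} {w : ℂ} (hE : IsEval T w E) (n : ℕ) {x : H}
    (hx : x ∈ kerAdj T) : E ((T ^ n) x) = w ^ n • x := by
  have hsingle : ∀ j, (Pi.single n x : ℕ → H) j ∈ kerAdj T := fun j => by
    rcases eq_or_ne j n with rfl | hj
    · simpa using hx
    · simp [Pi.single_eq_of_ne hj]
  simpa [Pi.single_apply, apply_ite] using hE.2 n (Pi.single n x) hsingle

theorem IsEval.range_sub_smul_one_le_ker {T E : H →L[ℂ] H} {w : ℂ} (hT : WSP T)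
    (hE : IsEval T w E) :
    LinearMap.range ((T - w • 1 : H →L[ℂ] H) : H →ₗ[ℂ] H) ≤ LinearMap.ker (E : H →ₗ[ℂ] H) := by
  have hker := hT.eq_top_of_isClosed (isClosed_ker (E ∘L (T - w • 1))) fun n x hx => by
    change E ((T - w • 1) ((T ^ n) x)) = 0
    rw [sub_apply, smul_apply, one_apply_eq_self, map_sub, map_smul, ← mul_apply_eq_comp T,
      ← pow_succ', hE.apply_pow_apply_s4 _ hx, hE.apply_pow_apply_s4 _ hx, pow_succ', mul_smul,
      sub_self]
  rintro _ ⟨y, rfl⟩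
  exact eq_top_iff'.1 hker y

theorem IsEval.ker_le_closure_range {T E : H →L[ℂ] H} {w : ℂ} (hT : WSP T)
    (hE : IsEval T w E) :
    LinearMap.ker (E : H →ₗ[ℂ] H) ≤
      (LinearMap.range ((T - w • 1 : H →L[ℂ] H) : H →ₗ[ℂ] H)).topologicalClosure := by
  set R := LinearMap.range ((T - w • 1 : H →L[ℂ] H) : H →ₗ[ℂ] H)
  have hK := hT.eq_top_of_isClosed
    (K := R.topologicalClosure.comap ((1 - E : H →L[ℂ] H) : H →ₗ[ℂ] H))
    (R.isClosed_topologicalClosure.preimage (1 - E).continuous) fun n x hx => by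
      change (1 - E) ((T ^ n) x) ∈ R.topologicalClosure
      rw [sub_apply, one_apply_eq_self, hE.apply_pow_apply_s4 n hx]
      exact R.le_topologicalClosure (pow_apply_sub_pow_smul_mem_range T w n x)
  intro y hy
  have hEy : E y = 0 := hy
  simpa [hEy] using eq_top_iff'.1 hK y

theorem stmt_4_general (T : H →L[ℂ] H) (hT : WSP T)
    (w : ℂ) (E : H →L[ℂ] H) (hE : IsEval T w E) :
    LinearMap.ker (E : H →ₗ[ℂ] H) =
      (LinearMap.range ((T - w • (1 : H →L[ℂ] H) : H →L[ℂ] H) : H →ₗ[ℂ] H)).topologicalClosure :=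
  le_antisymm (hE.ker_le_closure_range hT)
    (topologicalClosure_minimal _ (hE.range_sub_smul_one_le_ker hT) (isClosed_ker E))

/-- `ker E_w = cl ran (T - w)`. -/
theorem stmt_4 [TopologicalSpace.SeparableSpace H] (T : H →L[ℂ] H) (hT : WSP T)
    (w : ℂ) (hw : IsBPE T w) (E : H →L[ℂ] H) (hE : IsEval T w E) :
    LinearMap.ker (E : H →ₗ[ℂ] H) =
      (LinearMap.range ((T - w • (1 : H →L[ℂ] H) : H →L[ℂ] H) : H →ₗ[ℂ] H)).topologicalClosure :=
  stmt_4_general T hT w E hE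
end
end

section
/- Let T be a bounded operator with the wandering subspace property. If T is circular (for every θ ∈ ℝ there is a unitary U_θ with U_θ T = e^{iθ} T U_θ), then the set bpe(T) of bounded point evaluations is circularly symmetric: w ∈ bpe(T) implies e^{iθ}w ∈ bpe(T) for all θ ∈ ℝ. -/
open ContinuousLinearMap Submodule Filter

noncomputable section

variable {H : Type*} [NormedAddCommGroup H] [InnerProductSpace ℂ H] [CompleteSpace H]

section Intertwining

variable {𝕜 E : Type*} [NormedField 𝕜] [SeminormedAddCommGroup E] [NormedSpace 𝕜 E]

theorem LinearIsometryEquiv.apply_pow_apply_of_intertwine {T : E →L[𝕜] E} {U : E ≃ₗᵢ[𝕜] E}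
    {l : 𝕜} (hU : ∀ x, U (T x) = l • T (U x)) (n : ℕ) (x : E) :
    U ((T ^ n) x) = l ^ n • (T ^ n) (U x) := by
  induction n generalizing x with
  | zero => simp
  | succ n ih =>
    rw [pow_succ, mul_apply_eq_comp, mul_apply_eq_comp, ih, hU, (T ^ n).map_smul, smul_smul,
      pow_succ]

theorem LinearIsometryEquiv.symm_apply_of_intertwine {T : E →L[𝕜] E} {U : E ≃ₗᵢ[𝕜] E}
    {l : 𝕜} (hl : l ≠ 0) (hU : ∀ x, U (T x) = l • T (U x)) (x : E) :
    U.symm (T x) = l⁻¹ • T (U.symm x) := by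
  rw [eq_inv_smul_iff₀ hl]
  apply U.injective
  rw [map_smul, U.apply_symm_apply, hU, U.apply_symm_apply]

end Intertwining

section Circular

variable {T : H →L[ℂ] H} {U : H ≃ₗᵢ[ℂ] H} {l : ℂ}

theorem LinearIsometryEquiv.apply_mem_kerAdj_of_intertwine (hl : l ≠ 0)
    (hU : ∀ x, U (T x) = l • T (U x)) {v : H} (hv : v ∈ kerAdj T) : U v ∈ kerAdj T := by
  have hTv : adjoint T v = 0 := hv
  show adjoint T (U v) = 0
  refine ext_inner_right ℂ fun z => ?_
  rw [adjoint_inner_left, inner_zero_left, U.inner_map_eq_flip,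
    U.symm_apply_of_intertwine hl hU, inner_smul_right, ← adjoint_inner_left, hTv,
    inner_zero_left, mul_zero]

/-- Conjugating by `U` turns the polynomial `Σ xₙ zⁿ` into `Σ lⁿ U xₙ zⁿ`, so the defining
inequality of `bpe(T)` at `w` becomes the one at `l * w`. -/
theorem IsBPE.mul_of_intertwine (hl : l ≠ 0) (hU : ∀ x, U (T x) = l • T (U x)) {w : ℂ}
    (hw : IsBPE T w) : IsBPE T (l * w) := by
  obtain ⟨c, hc, hbound⟩ := hw
  refine ⟨c, hc, fun k x hx => ?_⟩
  set y : ℕ → H := fun n => l ^ n • U (x n)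
  have hy : ∀ n, y n ∈ kerAdj T :=
    fun n => (kerAdj T).smul_mem _ (U.apply_mem_kerAdj_of_intertwine hl hU (hx n))
  have heval : U (∑ n ∈ Finset.range (k + 1), (l * w) ^ n • x n) =
      ∑ n ∈ Finset.range (k + 1), w ^ n • y n := by
    simp only [y, map_sum, map_smul, smul_smul, mul_pow, mul_comm]
  have hpoly : U (∑ n ∈ Finset.range (k + 1), (T ^ n) (x n)) =
      ∑ n ∈ Finset.range (k + 1), (T ^ n) (y n) := by
    simp only [y, map_sum, map_smul, U.apply_pow_apply_of_intertwine hU]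
  calc ‖∑ n ∈ Finset.range (k + 1), (l * w) ^ n • x n‖
      = ‖∑ n ∈ Finset.range (k + 1), w ^ n • y n‖ := by rw [← heval, U.norm_map]
    _ ≤ c * ‖∑ n ∈ Finset.range (k + 1), (T ^ n) (y n)‖ := hbound k y hy
    _ = c * ‖∑ n ∈ Finset.range (k + 1), (T ^ n) (x n)‖ := by rw [← hpoly, U.norm_map]

end Circular

theorem stmt_7_general (T : H →L[ℂ] H)
    (hcirc : ∀ θ : ℝ, ∃ U : H ≃ₗᵢ[ℂ] H,
      ∀ x : H, U (T x) = Complex.exp (θ * Complex.I) • T (U x)) :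
    ∀ w : ℂ, IsBPE T w → ∀ θ : ℝ, IsBPE T (Complex.exp (θ * Complex.I) * w) := by
  intro w hw θ
  obtain ⟨U, hU⟩ := hcirc θ
  exact hw.mul_of_intertwine (Complex.exp_ne_zero _) hU

/-- for circular `T`, `bpe(T)` is circularly symmetric. -/
theorem stmt_7 [TopologicalSpace.SeparableSpace H] (T : H →L[ℂ] H) (hT : WSP T)
    (hcirc : ∀ θ : ℝ, ∃ U : H ≃ₗᵢ[ℂ] H,
      ∀ x : H, U (T x) = Complex.exp (θ * Complex.I) • T (U x)) :
    ∀ w : ℂ, IsBPE T w → ∀ θ : ℝ, IsBPE T (Complex.exp (θ * Complex.I) * w) :=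
  stmt_7_general T hcirc
end
end

section
/- Let T be a left-invertible operator on a complex separable Hilbert space and x ∈ H with x ∈ ran(T − w) for all w in the open disc D(0, ‖T'‖^{-1}), where T' is the Cauchy dual. Writing x = (T − w)x(w), the function w ↦ x(w) is given by x(w) = Σ_{n∈ℕ} w^n (T'*)^{n+1} x and is analytic on D(0, ‖T'‖^{-1}). -/
open ContinuousLinearMap Submodule Filter

noncomputable section

variable {H : Type*} [NormedAddCommGroup H] [InnerProductSpace ℂ H] [CompleteSpace H]

/-! Since `T'* T = 1`, applying `T'*` to `(T - w) x(w) = x` gives `(1 - w T'*) x(w) = T'* x`.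
For `‖w‖ ‖T'*‖ < 1` the Neumann series inverts `1 - w T'*`, so `x(w) = (1 - w T'*)⁻¹ T'* x`,
and this is analytic in `w` because inversion is analytic on the units of a Banach algebra.
As `‖T'*‖ = ‖T'‖`, all of this holds on `D(0, ‖T'‖⁻¹)`. -/

section NeumannSeries

variable {𝕜 E : Type*} [NontriviallyNormedField 𝕜] [NormedAddCommGroup E] [NormedSpace 𝕜 E]

theorem sub_smul_apply_eq_of_comp_eq_one {S T : E →L[𝕜] E} (hST : S ∘L T = 1) {w : 𝕜} {x y : E}
    (h : (T - w • (1 : E →L[𝕜] E)) y = x) : y - w • S y = S x := by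
  have hSTy : S (T y) = y := by simpa using congr($hST y)
  simpa [hSTy] using congr(S $h)

theorem norm_smul_lt_one_of_mem_ball (S : E →L[𝕜] E) {w : 𝕜} (hw : w ∈ Metric.ball 0 ‖S‖⁻¹) :
    ‖w • S‖ < 1 := by
  rw [mem_ball_zero_iff] at hw
  rcases (norm_nonneg S).eq_or_lt with hS | hS
  · simp [norm_smul, ← hS]
  · calc ‖w • S‖ = ‖w‖ * ‖S‖ := norm_smul w S
      _ < ‖S‖⁻¹ * ‖S‖ := by gcongr
      _ = 1 := inv_mul_cancel₀ hS.ne'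

variable [CompleteSpace E] (S : E →L[𝕜] E)

theorem eq_inverse_one_sub_smul_apply {w : 𝕜} (hw : ‖w • S‖ < 1) {y z : E}
    (h : y - w • S y = z) : y = Ring.inverse (1 - w • S) z := by
  have hinv := congr($(Ring.inverse_mul_cancel _ (isUnit_one_sub_of_norm_lt_one hw)) y)
  rw [← h]
  simpa using hinv.symm

theorem hasSum_pow_smul_apply_inverse_one_sub_smul {w : 𝕜} (hw : ‖w • S‖ < 1) (z : E) :
    HasSum (fun n : ℕ => w ^ n • (S ^ n) z) (Ring.inverse (1 - w • S) z) := by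
  simpa only [smul_pow, smul_apply, apply_apply] using
    (apply 𝕜 E z).hasSum (hasSum_geom_series_inverse (w • S) hw)

theorem analyticOnNhd_inverse_one_sub_smul_apply (z : E) :
    AnalyticOnNhd 𝕜 (fun w : 𝕜 => Ring.inverse (1 - w • S) z) (Metric.ball 0 ‖S‖⁻¹) := by
  intro w hw
  have hunit := isUnit_one_sub_of_norm_lt_one (norm_smul_lt_one_of_mem_ball S hw)
  have hinv : AnalyticAt 𝕜 (fun v : 𝕜 => Ring.inverse (1 - v • S)) w :=
    (analyticAt_inverse (𝕜 := 𝕜) hunit.unit).comp_of_eq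
      (analyticAt_const.sub (analyticAt_id.smul analyticAt_const)) hunit.unit_spec.symm
  exact (apply 𝕜 E z).analyticAt _ |>.comp hinv

end NeumannSeries

theorem adjoint_comp_comp_self_eq_one {T A : H →L[ℂ] H}
    (hA : (ContinuousLinearMap.adjoint T ∘L T) ∘L A = 1) :
    ContinuousLinearMap.adjoint (T ∘L A) ∘L T = 1 := by
  simpa [adjoint_comp, comp_assoc, adjoint_one] using congr(ContinuousLinearMap.adjoint $hA)

theorem stmt_19_general (T T' A : H →L[ℂ] H)
    (hA2 : (ContinuousLinearMap.adjoint T ∘L T) ∘L A = 1)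
    (hT' : T' = T ∘L A)
    (x : H) (xf : ℂ → H)
    (hx : ∀ w : ℂ, ‖w‖ < ‖T'‖⁻¹ → (T - w • (1 : H →L[ℂ] H)) (xf w) = x) :
    (∀ w : ℂ, ‖w‖ < ‖T'‖⁻¹ →
      HasSum (fun n : ℕ => w ^ n • ((ContinuousLinearMap.adjoint T') ^ (n + 1)) x) (xf w)) ∧
    AnalyticOnNhd ℂ xf (Metric.ball 0 ‖T'‖⁻¹) := by
  subst hT'
  set S := ContinuousLinearMap.adjoint (T ∘L A)
  have hST : S ∘L T = 1 := adjoint_comp_comp_self_eq_one hA2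
  have hS : ‖T ∘L A‖ = ‖S‖ := (LinearIsometryEquiv.norm_map _ _).symm
  rw [hS] at hx ⊢
  have hxf : Set.EqOn xf (fun w => Ring.inverse (1 - w • S) (S x)) (Metric.ball 0 ‖S‖⁻¹) :=
    fun w hw => eq_inverse_one_sub_smul_apply S (norm_smul_lt_one_of_mem_ball S hw)
      (sub_smul_apply_eq_of_comp_eq_one hST (hx w (mem_ball_zero_iff.mp hw)))
  refine ⟨fun w hw => ?_,
    (analyticOnNhd_inverse_one_sub_smul_apply S (S x)).congr Metric.isOpen_ball hxf.symm⟩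
  have hw' : w ∈ Metric.ball 0 ‖S‖⁻¹ := mem_ball_zero_iff.mpr hw
  rw [hxf hw']
  simpa only [pow_succ, mul_apply_eq_comp] using
    hasSum_pow_smul_apply_inverse_one_sub_smul S (norm_smul_lt_one_of_mem_ball S hw') (S x)

/-- if `x ∈ ran(T - w)` for all `|w| < ‖T'‖⁻¹`, with `x = (T - w) x(w)`, then
`x(w) = Σₙ wⁿ (T'*)ⁿ⁺¹ x` and `w ↦ x(w)` is analytic on `D(0, ‖T'‖⁻¹)`. -/
theorem stmt_19 [TopologicalSpace.SeparableSpace H] (T T' A : H →L[ℂ] H)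
    (hA1 : A ∘L (ContinuousLinearMap.adjoint T ∘L T) = 1)
    (hA2 : (ContinuousLinearMap.adjoint T ∘L T) ∘L A = 1)
    (hT' : T' = T ∘L A)
    (x : H) (xf : ℂ → H)
    (hx : ∀ w : ℂ, ‖w‖ < ‖T'‖⁻¹ → (T - w • (1 : H →L[ℂ] H)) (xf w) = x) :
    (∀ w : ℂ, ‖w‖ < ‖T'‖⁻¹ →
      HasSum (fun n : ℕ => w ^ n • ((ContinuousLinearMap.adjoint T') ^ (n + 1)) x) (xf w)) ∧
    AnalyticOnNhd ℂ xf (Metric.ball 0 ‖T'‖⁻¹) :=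
  stmt_19_general T T' A hA2 hT' x xf hx
end
end
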